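/- arXiv:2108.00889 — 2 statements merged into one kernel-verified Lean document; each statement's English description precedes it below -/
import Mathlib

section
/- Let (S, →) be a transition system with a quasi-order ≤ satisfying strong compatibility, let I ⊆ S be upward-closed, J ⊆ S be downward-closed, and μ the associated μ-function. Then μ(↑A) = μ(A) for every A ⊆ S, where ↑A is the upward closure of A. -/
/-- `StepN r j s t` : `t` is reachable from `s` in exactly `j` steps of `r`. -/
def StepN {S : Type*} (r : S → S → Prop) : ℕ → S → S → Prop
  | 0 => fun s t => s = t
  | n + 1 => fun s t => ∃ u, r s u ∧ StepN r n u t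

/-- `preN r j A = {s | ∃ t ∈ A, s →^j t}`. -/
def preN {S : Type*} (r : S → S → Prop) (j : ℕ) (A : Set S) : Set S :=
  {s | ∃ t ∈ A, StepN r j s t}

/-- `postN r j A` : states reachable from `A` in exactly `j` steps. -/
def postN {S : Type*} (r : S → S → Prop) (j : ℕ) (A : Set S) : Set S :=
  {t | ∃ s ∈ A, StepN r j s t}

/-- `postStar r A = ⋃ j, postN r j A`. -/
def postStar {S : Type*} (r : S → S → Prop) (A : Set S) : Set S :=
  ⋃ j : ℕ, postN r j A

/-- Upward-closed set w.r.t. the quasi-order. -/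
def UpClosed {S : Type*} [Preorder S] (A : Set S) : Prop :=
  ∀ ⦃a⦄, a ∈ A → ∀ ⦃s⦄, a ≤ s → s ∈ A

/-- Downward-closed set w.r.t. the quasi-order. -/
def DownClosed {S : Type*} [Preorder S] (A : Set S) : Prop :=
  ∀ ⦃s d⦄, s ≤ d → d ∈ A → s ∈ A

/-- Upward closure of a set. -/
def upClo {S : Type*} [Preorder S] (A : Set S) : Set S := {s | ∃ a ∈ A, a ≤ s}

/-- Strong compatibility of a transition relation with the quasi-order. -/
def StrongCompat {S : Type*} [Preorder S] (r : S → S → Prop) : Prop :=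
  ∀ ⦃s t s'⦄, r s t → s ≤ s' → ∃ t', r s' t' ∧ t ≤ t'

/-- The μ-function: `μ(A) = min({k ∈ ℕ | A ∩ J ⊆ ⋃_{j≤k} pre^j(I)} ∪ {∞})`. -/
noncomputable def mu {S : Type*} (r : S → S → Prop) (I J A : Set S) : ℕ∞ :=
  sInf ({k : ℕ∞ | ∃ n : ℕ, k = (n : ℕ∞) ∧ A ∩ J ⊆ ⋃ j ≤ n, preN r j I} ∪ {⊤})

/-- Under strong compatibility, the μ-function is invariant under upward closure:
`μ(↑A) = μ(A)`. -/
theorem mu_upClo {S : Type*} [Preorder S] (r : S → S → Prop)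
    (hcomp : StrongCompat r) (I J : Set S)
    (hI : UpClosed I) (hJ : DownClosed J) (A : Set S) :
    mu r I J (upClo A) = mu r I J A := by
  have stepN_compat : ∀ j : ℕ, ∀ ⦃s t s' : S⦄, StepN r j s t → s ≤ s' →
      ∃ t', StepN r j s' t' ∧ t ≤ t' := by
    intro j
    induction j with
    | zero => intro s t s' h hle; exact ⟨s', rfl, h ▸ hle⟩
    | succ n ih =>
      rintro s t s' ⟨u, hsu, hut⟩ hle
      obtain ⟨u', hsu', huu'⟩ := hcomp hsu hle
      obtain ⟨t', hstep, htt'⟩ := ih hut huu'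
      exact ⟨t', ⟨u', hsu', hstep⟩, htt'⟩
  unfold mu
  congr 1
  ext k
  simp only [Set.mem_union, Set.mem_setOf_eq]
  constructor
  · rintro (⟨n, rfl, hsub⟩ | h)
    · refine Or.inl ⟨n, rfl, fun s hs => hsub ⟨⟨s, hs.1, le_refl s⟩, hs.2⟩⟩
    · exact Or.inr h
  · rintro (⟨n, rfl, hsub⟩ | h)
    · refine Or.inl ⟨n, rfl, ?_⟩
      rintro s ⟨⟨a, haA, has⟩, hsJ⟩
      have haJ : a ∈ J := hJ has hsJ
      have := hsub ⟨haA, haJ⟩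
      simp only [Set.mem_iUnion] at this ⊢
      obtain ⟨j, hj, t, htI, hstep⟩ := this
      obtain ⟨t', hstep', htt'⟩ := stepN_compat j hstep has
      exact ⟨j, hj, t', hI htI htt', hstep'⟩
    · exact Or.inr h
end

section
/- Let (S, →) be a transition system with a well-quasi-order ≤ satisfying strong compatibility, let I ⊆ S be upward-closed, J ⊆ S be downward-closed, and s ∈ S a start state. Define k^ℓ_un = μ(⋃_{j≤ℓ} post^j({s})) and k_min = μ(post*({s})). Then the sequence (k^ℓ_un)_ℓ converges to k_min and eventually stabilizes: there exists L ∈ ℕ such that k^ℓ_un = k_min for all ℓ ≥ L. -/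
/-- `≤` is a well-quasi-order: every infinite sequence admits `i < j` with `f i ≤ f j`. -/
def IsWqo (S : Type*) [Preorder S] : Prop :=
  ∀ f : ℕ → S, ∃ i j : ℕ, i < j ∧ f i ≤ f j

section Aux
variable {S : Type*} [Preorder S] {r : S → S → Prop} {I J : Set S}

lemma preN_upClosed (hcomp : StrongCompat r) (hI : UpClosed I) :
    ∀ j, UpClosed (preN r j I) := by
  intro j
  induction j with
  | zero =>
    intro a ha x hle
    obtain ⟨t, ht, h⟩ := ha
    subst h
    exact ⟨x, hI ht hle, rfl⟩
  | succ n ih =>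
    intro a ha x hle
    obtain ⟨t, ht, u, hau, hut⟩ := ha
    obtain ⟨u', hxu', huu'⟩ := hcomp hau hle
    obtain ⟨t', ht', h⟩ := ih ⟨t, ht, hut⟩ huu'
    exact ⟨t', ht', u', hxu', h⟩

lemma chain_stab (hwqo : IsWqo S) (B : ℕ → Set S)
    (hmono : ∀ ⦃m n : ℕ⦄, m ≤ n → B m ⊆ B n)
    (hup : ∀ n, UpClosed (B n)) : ∃ N, ∀ n, B n ⊆ B N := by
  by_contra h
  push_neg at h
  have h' : ∀ N : ℕ, ∃ m : ℕ, ∃ x : S, x ∈ B m ∧ x ∉ B N := by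
    intro N
    obtain ⟨m, hm⟩ := h N
    obtain ⟨x, hx1, hx2⟩ := Set.not_subset.mp hm
    exact ⟨m, x, hx1, hx2⟩
  choose n x hx1 hx2 using h'
  let ψ : ℕ → ℕ := fun k => Nat.rec 0 (fun _ acc => max (acc + 1) (n acc)) k
  have hψsucc : ∀ k, ψ (k + 1) = max (ψ k + 1) (n (ψ k)) := fun k => rfl
  have hψmono : StrictMono ψ := by
    apply strictMono_nat_of_lt_succ
    intro k
    rw [hψsucc]
    exact lt_of_lt_of_le (Nat.lt_succ_self _) (le_max_left _ _)
  obtain ⟨i, j, hij, hle⟩ := hwqo (fun k => x (ψ k))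
  have hn : n (ψ i) ≤ ψ j := by
    calc n (ψ i) ≤ ψ (i + 1) := by rw [hψsucc]; exact le_max_right _ _
    _ ≤ ψ j := hψmono.monotone hij
  exact hx2 (ψ j) (hup (ψ j) (hmono hn (hx1 (ψ i))) hle)

lemma mu_le {A : Set S} {n : ℕ} (h : A ∩ J ⊆ ⋃ j ≤ n, preN r j I) :
    mu r I J A ≤ (n : ℕ∞) :=
  sInf_le (Or.inl ⟨n, rfl, h⟩)

lemma mu_mono {A A' : Set S} (h : A ⊆ A') : mu r I J A ≤ mu r I J A' := by
  apply sInf_le_sInf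
  rintro k (⟨m, rfl, hsub⟩ | hk)
  · exact Or.inl ⟨m, rfl, (Set.inter_subset_inter_left J h).trans hsub⟩
  · exact Or.inr hk

lemma mu_finite {A : Set S} (h : mu r I J A ≠ ⊤) :
    ∃ n : ℕ, mu r I J A = (n : ℕ∞) ∧ A ∩ J ⊆ ⋃ j ≤ n, preN r j I := by
  have hex : ∃ n : ℕ, A ∩ J ⊆ ⋃ j ≤ n, preN r j I := by
    by_contra hne
    push_neg at hne
    apply h
    have : ({k : ℕ∞ | ∃ n : ℕ, k = (n : ℕ∞) ∧ A ∩ J ⊆ ⋃ j ≤ n, preN r j I} ∪ {⊤}) = {⊤} := by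
      ext k
      constructor
      · rintro (⟨m, rfl, hsub⟩ | hk)
        · exact absurd hsub (hne m)
        · exact hk
      · exact Or.inr
    rw [mu, this, sInf_singleton]
  classical
  set n₀ := Nat.find hex with hn₀
  refine ⟨n₀, le_antisymm (mu_le (Nat.find_spec hex)) ?_, Nat.find_spec hex⟩
  apply le_sInf
  rintro k (⟨m, rfl, hsub⟩ | hk)
  · exact_mod_cast Nat.find_min' hex hsub
  · simp [Set.mem_singleton_iff.mp hk]

end Aux

/-- For a strongly well-structured transition system, the under-approximations
`k^ℓ_un` converge to `k_min`, eventually stabilizing. -/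
theorem kun_stabilizes {S : Type*} [Preorder S] (r : S → S → Prop)
    (hwqo : IsWqo S) (hcomp : StrongCompat r) (I J : Set S)
    (hI : UpClosed I) (hJ : DownClosed J) (s : S) :
    ∃ L : ℕ, ∀ ℓ ≥ L,
      mu r I J (⋃ j ≤ ℓ, postN r j {s}) = mu r I J (postStar r {s}) := by
  set A : ℕ → Set S := fun ℓ => ⋃ j ≤ ℓ, postN r j {s} with hAdef
  set B : ℕ → Set S := fun n => ⋃ j ≤ n, preN r j I with hBdef
  have hAmono : ∀ ⦃l l' : ℕ⦄, l ≤ l' → A l ⊆ A l' := by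
    intro l l' hll x hx
    obtain ⟨j, hj, hx⟩ := Set.mem_iUnion₂.mp hx
    exact Set.mem_iUnion₂.mpr ⟨j, hj.trans hll, hx⟩
  have hAsub : ∀ l, A l ⊆ postStar r {s} := by
    intro l x hx
    obtain ⟨j, _, hx⟩ := Set.mem_iUnion₂.mp hx
    exact Set.mem_iUnion.mpr ⟨j, hx⟩
  have hcover : ∀ x ∈ postStar r {s}, ∃ l, x ∈ A l := by
    intro x hx
    obtain ⟨j, hx⟩ := Set.mem_iUnion.mp hx
    exact ⟨j, Set.mem_iUnion₂.mpr ⟨j, le_refl j, hx⟩⟩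
  have hBmono : ∀ ⦃m n : ℕ⦄, m ≤ n → B m ⊆ B n := by
    intro m n hmn x hx
    obtain ⟨j, hj, hx⟩ := Set.mem_iUnion₂.mp hx
    exact Set.mem_iUnion₂.mpr ⟨j, hj.trans hmn, hx⟩
  have hBup : ∀ n, UpClosed (B n) := by
    intro n a ha x hle
    obtain ⟨j, hj, ha⟩ := Set.mem_iUnion₂.mp ha
    exact Set.mem_iUnion₂.mpr ⟨j, hj, preN_upClosed hcomp hI j ha hle⟩
  by_cases htop : mu r I J (postStar r {s}) = ⊤
  · -- infinite case
    obtain ⟨N, hN⟩ := chain_stab hwqo B hBmono hBup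
    have hL : ∃ L, mu r I J (A L) = ⊤ := by
      by_contra hne
      push_neg at hne
      have hall : ∀ l, A l ∩ J ⊆ B N := by
        intro l
        obtain ⟨m, _, hsub⟩ := mu_finite (hne l)
        exact hsub.trans (hN m)
      have hstar : postStar r {s} ∩ J ⊆ B N := by
        rintro x ⟨hx, hxJ⟩
        obtain ⟨l, hl⟩ := hcover x hx
        exact hall l ⟨hl, hxJ⟩
      have := mu_le (r := r) (I := I) (J := J) hstar
      rw [htop] at this
      exact absurd (top_le_iff.mp this) (by simp)
    obtain ⟨L, hL⟩ := hL
    refine ⟨L, fun ℓ hℓ => ?_⟩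
    rw [htop]
    have := mu_mono (r := r) (I := I) (J := J) (hAmono hℓ)
    rw [hL] at this
    exact top_le_iff.mp this
  · -- finite case
    obtain ⟨n, hn, hPn⟩ := mu_finite htop
    have hub : ∀ l, mu r I J (A l) ≤ (n : ℕ∞) := fun l =>
      (mu_mono (hAsub l)).trans hn.le
    have hL : ∃ L, mu r I J (A L) = (n : ℕ∞) := by
      by_contra hne
      push_neg at hne
      have hlt : ∀ l, mu r I J (A l) < (n : ℕ∞) := fun l =>
        lt_of_le_of_ne (hub l) (hne l)
      match n, hn, hPn, hub, hlt with
      | 0, hn, hPn, hub, hlt =>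
        exact absurd (hlt 0) (by simp)
      | n' + 1, hn, hPn, hub, hlt =>
        have hall : ∀ l, A l ∩ J ⊆ B n' := by
          intro l
          obtain ⟨m, hm, hsub⟩ := mu_finite (hlt l).ne_top
          have : (m : ℕ∞) < ((n' + 1 : ℕ) : ℕ∞) := hm ▸ hlt l
          have hm' : m ≤ n' := Nat.lt_succ_iff.mp (by exact_mod_cast this)
          exact hsub.trans (hBmono hm')
        have hstar : postStar r {s} ∩ J ⊆ B n' := by
          rintro x ⟨hx, hxJ⟩
          obtain ⟨l, hl⟩ := hcover x hx
          exact hall l ⟨hl, hxJ⟩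
        have h1 := mu_le (r := r) (I := I) (J := J) hstar
        rw [hn] at h1
        exact absurd h1 (by exact_mod_cast Nat.not_succ_le_self n')
    obtain ⟨L, hL⟩ := hL
    refine ⟨L, fun ℓ hℓ => ?_⟩
    rw [hn]
    refine le_antisymm (hub ℓ) ?_
    calc (n : ℕ∞) = mu r I J (A L) := hL.symm
    _ ≤ mu r I J (A ℓ) := mu_mono (hAmono hℓ)
end
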